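/- In the setting of the abstract Combes–Thomas bound (H = −gA + W on ℓ²(V) as above, with form bound constant c > 0), fix δ′ > 0 and K > 0 such that gc < 1 and W₀ < K − δ′. Let V̄_K = {x ∈ V : w(x) > K}. Then for every ε ∈ ℝ and every E ≤ (1 − cg)(K − δ′), the compression of H − (E + iε) to ℓ²(V̄_K) (i.e. the operator f ↦ χ_{V̄_K}((H − E − iε) f) on functions supported in V̄_K) has a bounded inverse R̄ on ℓ²(V̄_K), and for all nonempty subsets 𝒜, ℬ ⊆ V̄_K: ‖χ_𝒜 R̄ χ_ℬ‖ ≤ C · exp(−η · dist(𝒜, ℬ)), where C = 4/(δ′(1 − cg)) and η = (1/s_max) · log(1 + δ′(1 − cg)/(4Kcg)). -/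

import Mathlib

open scoped Classical

/-- The Hilbert space `ℓ²(V)` of square-summable complex functions on `V`. -/
noncomputable abbrev l2 (V : Type*) := lp (fun _ : V => ℂ) 2

/-- Graph distance between two nonempty sets of vertices. -/
noncomputable def setGraphDist {V : Type*} (G : SimpleGraph V) (𝒜 ℬ : Set V) : ℕ :=
  sInf {d : ℕ | ∃ x ∈ 𝒜, ∃ y ∈ ℬ, d = G.dist x y}

open scoped ComplexConjugate ENNReal

set_option maxHeartbeats 1000000

namespace CTaux
variable {V : Type*}





lemma memℓp_of_le {f g : V → ℂ} (hg : Memℓp g 2) (h : ∀ x, ‖f x‖ ≤ ‖g x‖) :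
    Memℓp f 2 := by
  apply memℓp_gen
  have hs : Summable fun x => ‖g x‖ ^ (2 : ℝ≥0∞).toReal :=
    (memℓp_gen_iff (by norm_num)).1 hg
  exact hs.of_nonneg_of_le (fun x => Real.rpow_nonneg (norm_nonneg _) _)
    (fun x => Real.rpow_le_rpow (norm_nonneg _) (h x) (by norm_num))

/-- squared norm as tsum -/
lemma norm_sq_eq_tsum (f : l2 V) : ‖f‖ ^ 2 = ∑' x, ‖f x‖ ^ 2 := by
  have h := lp.norm_rpow_eq_tsum (p := 2) (by norm_num) f
  norm_num at h
  simpa using h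

lemma summable_norm_sq (f : l2 V) : Summable fun x => ‖f x‖ ^ 2 := by
  have hs : Summable fun x => ‖f x‖ ^ (2 : ℝ≥0∞).toReal :=
    (memℓp_gen_iff (by norm_num)).1 (lp.memℓp f)
  refine hs.congr fun x => ?_
  norm_num

/-- pointwise domination gives norm bound -/
lemma norm_le_of_pointwise (f g : l2 V) (C : ℝ) (hC : 0 ≤ C)
    (h : ∀ x, ‖f x‖ ≤ C * ‖g x‖) : ‖f‖ ≤ C * ‖g‖ := by
  have h2 : ‖f‖ ^ 2 ≤ (C * ‖g‖) ^ 2 := by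
    rw [norm_sq_eq_tsum, mul_pow, norm_sq_eq_tsum, ← tsum_mul_left]
    refine Summable.tsum_le_tsum (fun x => ?_) (summable_norm_sq f)
      ((summable_norm_sq g).mul_left _)
    have := h x
    have := norm_nonneg (f x)
    nlinarith
  have h3 : 0 ≤ C * ‖g‖ := mul_nonneg hC (norm_nonneg g)
  nlinarith [norm_nonneg f]

lemma memℓp_mul (φ : V → ℝ) (C : ℝ) (hC : 0 ≤ C) (h : ∀ x, |φ x| ≤ C) (f : l2 V) :
    Memℓp (fun x => (φ x : ℂ) * f x) 2 := by
  refine memℓp_of_le ((lp.memℓp f).const_smul (C : ℂ)) fun x => ?_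
  have : ‖((C : ℂ) • (f : ∀ _ : V, ℂ)) x‖ = C * ‖f x‖ := by
    simp [abs_of_nonneg hC]
  rw [this, norm_mul, Complex.norm_real]
  exact mul_le_mul_of_nonneg_right (h x) (norm_nonneg _)

/-- multiplication operator by a bounded real function -/
noncomputable def mulOp (φ : V → ℝ) (C : ℝ) (hC : 0 ≤ C) (h : ∀ x, |φ x| ≤ C) :
    l2 V →L[ℂ] l2 V :=
  LinearMap.mkContinuous
    { toFun := fun f => (⟨fun x => (φ x : ℂ) * f x, memℓp_mul φ C hC h f⟩ : l2 V)
      map_add' := fun f g => by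
        apply lp.ext; funext x
        simp only [lp.coeFn_add, Pi.add_apply]
        change (φ x : ℂ) * (f x + g x) = (φ x : ℂ) * f x + (φ x : ℂ) * g x
        ring
      map_smul' := fun c f => by
        apply lp.ext; funext x
        simp only [lp.coeFn_smul, Pi.smul_apply, RingHom.id_apply, smul_eq_mul]
        change (φ x : ℂ) * (c * f x) = c * ((φ x : ℂ) * f x)
        ring }
    C (fun f => by
      refine (norm_le_of_pointwise _ f C hC fun x => ?_)
      change ‖(φ x : ℂ) * f x‖ ≤ C * ‖f x‖
      rw [norm_mul, Complex.norm_real]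
      exact mul_le_mul_of_nonneg_right (h x) (norm_nonneg _))

@[simp] lemma mulOp_apply (φ : V → ℝ) (C : ℝ) (hC : 0 ≤ C) (h : ∀ x, |φ x| ≤ C)
    (f : l2 V) (x : V) : (mulOp φ C hC h f) x = (φ x : ℂ) * f x := rfl


lemma inner_tsum (f g : l2 V) :
    (inner ℂ f g : ℂ) = ∑' x, conj (f x) * g x := by
  rw [lp.inner_eq_tsum]
  exact tsum_congr fun x => by rw [RCLike.inner_apply, mul_comm]

lemma summable_conj_mul (f g : l2 V) : Summable fun x => conj (f x) * g x := by
  have := lp.summable_inner (𝕜 := ℂ) f g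
  refine this.congr fun x => ?_
  rw [RCLike.inner_apply, mul_comm]

/-- coercive operators on a complex Hilbert space have bounded inverses -/
lemma coercive_inverse {E : Type*} [NormedAddCommGroup E] [InnerProductSpace ℂ E]
    [CompleteSpace E] (T : E →L[ℂ] E) (m : ℝ) (hm : 0 < m)
    (hc : ∀ f, m * ‖f‖ ^ 2 ≤ (inner ℂ f (T f) : ℂ).re) :
    ∃ S : E →L[ℂ] E, S.comp T = 1 ∧ T.comp S = 1 ∧ ‖S‖ ≤ m⁻¹ := by
  have hlow : ∀ f, m * ‖f‖ ≤ ‖T f‖ := by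
    intro f
    rcases eq_or_ne f 0 with rfl | hf
    · simp
    have h1 : m * ‖f‖ ^ 2 ≤ ‖f‖ * ‖T f‖ := by
      refine (hc f).trans ?_
      calc (inner ℂ f (T f) : ℂ).re ≤ ‖(inner ℂ f (T f) : ℂ)‖ := Complex.re_le_norm _
        _ ≤ ‖f‖ * ‖T f‖ := norm_inner_le_norm _ _
    have hf' : 0 < ‖f‖ := norm_pos_iff.2 hf
    calc m * ‖f‖ = (m * ‖f‖ ^ 2) / ‖f‖ := by field_simp
      _ ≤ (‖f‖ * ‖T f‖) / ‖f‖ := by gcongr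
      _ = ‖T f‖ := by field_simp
  have hanti : AntilipschitzWith ⟨m⁻¹, by positivity⟩ T := by
    refine T.antilipschitz_of_bound fun x => ?_
    have := hlow x
    change ‖x‖ ≤ m⁻¹ * ‖T x‖
    rw [inv_mul_eq_div, le_div_iff₀ hm]
    linarith
  have hinj : Function.Injective T := hanti.injective
  have hker : LinearMap.ker (T : E →ₗ[ℂ] E) = ⊥ := (LinearMap.ker_eq_bot (f := (T : E →ₗ[ℂ] E))).2 hinj
  have hclosed : IsClosed (Set.range T) := hanti.isClosed_range T.uniformContinuous
  have hclosed' : IsClosed ((LinearMap.range (T : E →ₗ[ℂ] E) : Submodule ℂ E) : Set E) := by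
    rwa [LinearMap.coe_range]
  haveI : CompleteSpace (LinearMap.range (T : E →ₗ[ℂ] E) : Submodule ℂ E) :=
    hclosed'.completeSpace_coe
  have horth : (LinearMap.range (T : E →ₗ[ℂ] E))ᗮ = ⊥ := by
    rw [Submodule.eq_bot_iff]
    intro y hy
    have h0 : (inner ℂ y (T y) : ℂ) = 0 := by
      have := (Submodule.mem_orthogonal _ _).1 hy (T y) (LinearMap.mem_range_self _ y)
      rw [← inner_conj_symm, this, map_zero]
    have := hc y
    rw [h0] at this
    have : ‖y‖ ^ 2 ≤ 0 := by
      simp at this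
      nlinarith
    have : ‖y‖ = 0 := by nlinarith [norm_nonneg y, sq_nonneg ‖y‖]
    simpa using this
  have hrange : LinearMap.range (T : E →ₗ[ℂ] E) = ⊤ := Submodule.orthogonal_eq_bot_iff.1 horth
  let e := ContinuousLinearEquiv.ofBijective T hker hrange
  refine ⟨e.symm.toContinuousLinearMap, ?_, ?_, ?_⟩
  · ext x
    simp only [ContinuousLinearMap.coe_comp', Function.comp_apply,
      ContinuousLinearEquiv.coe_coe, ContinuousLinearMap.one_apply]
    have : T x = e x := rfl
    rw [this, e.symm_apply_apply]
  · ext x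
    simp only [ContinuousLinearMap.coe_comp', Function.comp_apply,
      ContinuousLinearEquiv.coe_coe, ContinuousLinearMap.one_apply]
    have : T (e.symm x) = e (e.symm x) := rfl
    rw [this, e.apply_symm_apply]
  · refine ContinuousLinearMap.opNorm_le_bound _ (by positivity) fun y => ?_
    have hy : e.symm.toContinuousLinearMap y = e.symm y := rfl
    rw [hy]
    have h1 : m * ‖e.symm y‖ ≤ ‖T (e.symm y)‖ := hlow _
    have h2 : T (e.symm y) = y := by
      have : T (e.symm y) = e (e.symm y) := rfl
      rw [this, e.apply_symm_apply]
    rw [h2] at h1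
    rw [inv_mul_eq_div, le_div_iff₀ hm]
    linarith [h1]


lemma abs_exp_sub_one_le (t : ℝ) : |Real.exp t - 1| ≤ Real.exp |t| - 1 := by
  rcases le_or_gt 0 t with h | h
  · rw [abs_of_nonneg h, abs_of_nonneg (by nlinarith [Real.exp_le_exp.2 h, Real.exp_zero] : (0:ℝ) ≤ Real.exp t - 1)]
  · rw [abs_of_neg h, abs_of_nonpos (by nlinarith [Real.exp_lt_exp.2 h, Real.exp_zero] : Real.exp t - 1 ≤ 0)]
    have h1 := Real.one_le_cosh t
    rw [Real.cosh_eq] at h1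
    linarith

/-- distance from a point to a set -/
noncomputable def distToSet (G : SimpleGraph V) (ℬ : Set V) (x : V) : ℕ :=
  sInf {d : ℕ | ∃ y ∈ ℬ, d = G.dist x y}

lemma distToSet_exists (G : SimpleGraph V) {ℬ : Set V} (hB : ℬ.Nonempty) (x : V) :
    ∃ y ∈ ℬ, distToSet G ℬ x = G.dist x y := by
  have hne : {d : ℕ | ∃ y ∈ ℬ, d = G.dist x y}.Nonempty := by
    obtain ⟨y, hy⟩ := hB
    exact ⟨G.dist x y, y, hy, rfl⟩
  obtain ⟨y, hy, h⟩ := Nat.sInf_mem hne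
  exact ⟨y, hy, h⟩

lemma distToSet_le (G : SimpleGraph V) {ℬ : Set V} {y : V} (hy : y ∈ ℬ) (x : V) :
    distToSet G ℬ x ≤ G.dist x y :=
  Nat.sInf_le ⟨y, hy, rfl⟩

lemma distToSet_zero (G : SimpleGraph V) {ℬ : Set V} {x : V} (hx : x ∈ ℬ) :
    distToSet G ℬ x = 0 :=
  Nat.le_zero.1 ((distToSet_le G hx x).trans_eq (SimpleGraph.dist_self))

lemma distToSet_lipschitz (G : SimpleGraph V) (hconn : G.Connected) {ℬ : Set V}
    (hB : ℬ.Nonempty) (x x' : V) :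
    distToSet G ℬ x ≤ G.dist x x' + distToSet G ℬ x' := by
  obtain ⟨y, hy, h⟩ := distToSet_exists G hB x'
  calc distToSet G ℬ x ≤ G.dist x y := distToSet_le G hy x
    _ ≤ G.dist x x' + G.dist x' y := hconn.dist_triangle
    _ = G.dist x x' + distToSet G ℬ x' := by rw [h]

lemma setGraphDist_le_distToSet (G : SimpleGraph V) {𝒜 ℬ : Set V} (hB : ℬ.Nonempty)
    {x : V} (hx : x ∈ 𝒜) : setGraphDist G 𝒜 ℬ ≤ distToSet G ℬ x := by
  obtain ⟨y, hy, h⟩ := distToSet_exists G hB x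
  rw [h]
  exact Nat.sInf_le ⟨x, hx, y, hy, rfl⟩

section Kernel
variable {V : Type*}

noncomputable def absElt (u : l2 V) : l2 V :=
  ⟨fun x => (‖u x‖ : ℂ), memℓp_of_le (lp.memℓp u) (fun x => by simp)⟩

@[simp] lemma absElt_apply (u : l2 V) (x : V) : (absElt u) x = (‖u x‖ : ℂ) := rfl

variable (A : l2 V →L[ℂ] l2 V) (a : V → V → ℝ)

lemma row_memℓp (hsymm : ∀ x y, a x y = a y x)
    (hA : ∀ (f : l2 V) (x : V), A f x = ∑' y, (a x y : ℂ) * f y) (x : V) :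
    Memℓp (fun y => (a x y : ℂ)) 2 := by
  have h1 : ∀ y, (A (lp.single 2 x 1)) y = (a y x : ℂ) := by
    intro y
    rw [hA]
    rw [tsum_eq_single x]
    · rw [lp.single_apply_self]; ring
    · intro z hz
      rw [lp.single_apply_ne 2 x 1 hz]; ring
  refine memℓp_of_le (lp.memℓp (A (lp.single 2 x 1))) fun y => ?_
  rw [h1 y, hsymm x y]

noncomputable def rowElt (hsymm : ∀ x y, a x y = a y x)
    (hA : ∀ (f : l2 V) (x : V), A f x = ∑' y, (a x y : ℂ) * f y) (x : V) : l2 V :=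
  ⟨fun y => (a x y : ℂ), row_memℓp A a hsymm hA x⟩

lemma summable_row_mul (hsymm : ∀ x y, a x y = a y x)
    (hA : ∀ (f : l2 V) (x : V), A f x = ∑' y, (a x y : ℂ) * f y) (x : V) (h : l2 V) :
    Summable fun y => (a x y : ℂ) * h y := by
  have hs := summable_conj_mul (rowElt A a hsymm hA x) h
  refine hs.congr fun y => ?_
  have : (rowElt A a hsymm hA x) y = (a x y : ℂ) := rfl
  rw [this, Complex.conj_ofReal]

lemma summable_row_mul_real (hsymm : ∀ x y, a x y = a y x)
    (hpos : ∀ x y, 0 ≤ a x y)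
    (hA : ∀ (f : l2 V) (x : V), A f x = ∑' y, (a x y : ℂ) * f y) (x : V) (u : l2 V) :
    Summable fun y => a x y * ‖u y‖ := by
  have hs := (summable_norm_iff.2 (summable_row_mul A a hsymm hA x (absElt u)))
  refine hs.congr fun y => ?_
  simp [abs_of_nonneg (hpos x y)]

/-- the key kernel estimate -/
lemma key_bound (hsymm : ∀ x y, a x y = a y x) (hpos : ∀ x y, 0 ≤ a x y)
    (hA : ∀ (f : l2 V) (x : V), A f x = ∑' y, (a x y : ℂ) * f y)
    (θ : V → ℝ) (κ : ℝ) (hκ : 0 ≤ κ)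
    (hlip : ∀ x y, a x y ≠ 0 → |θ x - θ y| ≤ κ)
    (u v d : l2 V)
    (hv : ∀ y, v y = ((Real.exp (-θ y) : ℝ) : ℂ) * u y)
    (hd : ∀ x, d x = ((Real.exp (θ x) : ℝ) : ℂ) * (A v) x - (A u) x) :
    |(inner ℂ u d : ℂ).re| ≤
      (Real.exp κ - 1) * (inner ℂ (absElt u) (A (absElt u)) : ℂ).re := by
  set au := absElt u with hau
  -- the real row sums
  set s : V → ℝ := fun x => ∑' y, a x y * ‖u y‖ with hs
  have hsummable_s : ∀ x, Summable fun y => a x y * ‖u y‖ :=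
    fun x => summable_row_mul_real A a hsymm hpos hA x u
  have hAau : ∀ x, (A au) x = ((s x : ℝ) : ℂ) := by
    intro x
    rw [hA, Complex.ofReal_tsum]
    exact tsum_congr fun y => by push_cast; simp [hau]
  -- identity for d
  have hdx : ∀ x, d x = ∑' y, (a x y : ℂ) * (((Real.exp (θ x - θ y) : ℝ) : ℂ) - 1) * u y := by
    intro x
    have h1 : Summable fun y => (a x y : ℂ) * v y := summable_row_mul A a hsymm hA x v
    have h2 : Summable fun y => (a x y : ℂ) * u y := summable_row_mul A a hsymm hA x u
    rw [hd x, hA, hA, ← tsum_mul_left, ← Summable.tsum_sub (h1.mul_left _) h2]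
    refine tsum_congr fun y => ?_
    rw [hv y]
    have he : Real.exp (θ x - θ y) = Real.exp (θ x) * Real.exp (-θ y) := by
      rw [← Real.exp_add]; ring_nf
    rw [he]; push_cast; ring
  -- pointwise bound
  have hpt : ∀ x, ‖d x‖ ≤ (Real.exp κ - 1) * s x := by
    intro x
    have hbd : ∀ y, ‖(a x y : ℂ) * (((Real.exp (θ x - θ y) : ℝ) : ℂ) - 1) * u y‖
        ≤ (Real.exp κ - 1) * (a x y * ‖u y‖) := by
      intro y
      rcases eq_or_ne (a x y) 0 with h0 | h0
      · simp [h0]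
      have hl := hlip x y h0
      have : ‖(((Real.exp (θ x - θ y) : ℝ) : ℂ) - 1)‖ ≤ Real.exp κ - 1 := by
        have : (((Real.exp (θ x - θ y) : ℝ) : ℂ) - 1) = ((Real.exp (θ x - θ y) - 1 : ℝ) : ℂ) := by
          push_cast; ring
        rw [this, Complex.norm_real]
        refine (abs_exp_sub_one_le _).trans ?_
        have := Real.exp_le_exp.2 hl
        linarith
      calc ‖(a x y : ℂ) * (((Real.exp (θ x - θ y) : ℝ) : ℂ) - 1) * u y‖
          = a x y * ‖(((Real.exp (θ x - θ y) : ℝ) : ℂ) - 1)‖ * ‖u y‖ := by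
            rw [norm_mul, norm_mul, Complex.norm_real, Real.norm_eq_abs, abs_of_nonneg (hpos x y)]
        _ ≤ a x y * (Real.exp κ - 1) * ‖u y‖ := by
            have h1 := hpos x y
            have h2 := norm_nonneg (u y)
            have h3 := norm_nonneg ((((Real.exp (θ x - θ y) : ℝ) : ℂ) - 1))
            nlinarith [mul_nonneg h1 h2]
        _ = (Real.exp κ - 1) * (a x y * ‖u y‖) := by ring
    have hsb : Summable fun y => ‖(a x y : ℂ) * (((Real.exp (θ x - θ y) : ℝ) : ℂ) - 1) * u y‖ := by
      refine Summable.of_nonneg_of_le (fun y => norm_nonneg _) hbd ?_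
      exact (hsummable_s x).mul_left _
    calc ‖d x‖ = ‖∑' y, (a x y : ℂ) * (((Real.exp (θ x - θ y) : ℝ) : ℂ) - 1) * u y‖ := by
          rw [hdx x]
      _ ≤ ∑' y, ‖(a x y : ℂ) * (((Real.exp (θ x - θ y) : ℝ) : ℂ) - 1) * u y‖ :=
          norm_tsum_le_tsum_norm hsb
      _ ≤ ∑' y, (Real.exp κ - 1) * (a x y * ‖u y‖) :=
          Summable.tsum_le_tsum hbd hsb ((hsummable_s x).mul_left _)
      _ = (Real.exp κ - 1) * s x := tsum_mul_left
  -- summability of |u x| * s x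
  have hus : Summable fun x => ‖u x‖ * s x := by
    have h1 := summable_conj_mul au (A au)
    rw [← Complex.summable_ofReal]
    refine h1.congr fun x => ?_
    rw [hAau x]
    have : (au : ∀ _ : V, ℂ) x = (‖u x‖ : ℂ) := rfl
    rw [this, Complex.conj_ofReal]
    push_cast; ring
  have hnd : Summable fun x => ‖u x‖ * ‖d x‖ := by
    have h1 := summable_norm_iff.2 (summable_conj_mul u d)
    refine h1.congr fun x => ?_
    rw [norm_mul, RCLike.norm_conj]
  -- main chain
  have hchain : |(inner ℂ u d : ℂ).re| ≤ ∑' x, ‖u x‖ * ‖d x‖ := by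
    rw [inner_tsum]
    calc |(∑' x, conj (u x) * d x).re| ≤ ‖∑' x, conj (u x) * d x‖ := Complex.abs_re_le_norm _
      _ ≤ ∑' x, ‖conj (u x) * d x‖ := norm_tsum_le_tsum_norm (summable_norm_iff.2 (summable_conj_mul u d))
      _ = ∑' x, ‖u x‖ * ‖d x‖ := tsum_congr fun x => by rw [norm_mul, RCLike.norm_conj]
  have hchain2 : ∑' x, ‖u x‖ * ‖d x‖ ≤ (Real.exp κ - 1) * ∑' x, ‖u x‖ * s x := by
    rw [← tsum_mul_left]
    refine Summable.tsum_le_tsum (fun x => ?_) hnd ?_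
    · have h1 := hpt x
      have h2 := norm_nonneg (u x)
      nlinarith
    · exact hus.mul_left _
  have hfinal : (inner ℂ au (A au) : ℂ).re = ∑' x, ‖u x‖ * s x := by
    rw [inner_tsum, Complex.re_tsum (summable_conj_mul au (A au))]
    refine tsum_congr fun x => ?_
    rw [hAau x]
    have : (au : ∀ _ : V, ℂ) x = (‖u x‖ : ℂ) := rfl
    rw [this, Complex.conj_ofReal, ← Complex.ofReal_mul, Complex.ofReal_re]
  rw [hfinal]
  exact hchain.trans hchain2

end Kernel


section MainAux
set_option maxHeartbeats 1000000 in
lemma _dummy : True := trivial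
variable {V : Type*}

lemma re_ofReal_mul' (r : ℝ) (z : ℂ) : (((r:ℝ):ℂ) * z).re = r * z.re := by
  simp [Complex.mul_re]

/-- pointwise description of inner products against diagonal operators -/
lemma re_inner_diag (u Wu : l2 V) (m : V → ℝ) (hWu : ∀ x, Wu x = (m x : ℂ) * u x) :
    (inner ℂ u Wu : ℂ).re = ∑' x, m x * ‖u x‖ ^ 2 := by
  rw [inner_tsum, Complex.re_tsum (summable_conj_mul u Wu)]
  refine tsum_congr fun x => ?_
  rw [hWu x]
  have : conj (u x) * ((m x : ℂ) * u x) = ((m x * ‖u x‖ ^ 2 : ℝ) : ℂ) := by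
    have h1 : conj (u x) * ((m x : ℂ) * u x) = (m x : ℂ) * (u x * conj (u x)) := by ring
    rw [h1, Complex.mul_conj]
    rw [Complex.normSq_eq_norm_sq]
    push_cast; ring
  rw [this, Complex.ofReal_re]

lemma summable_diag (u Wu : l2 V) (m : V → ℝ) (hWu : ∀ x, Wu x = (m x : ℂ) * u x) :
    Summable fun x => m x * ‖u x‖ ^ 2 := by
  rw [← Complex.summable_ofReal]
  refine (summable_conj_mul u Wu).congr fun x => ?_
  rw [hWu x]
  have h1 : conj (u x) * ((m x : ℂ) * u x) = (m x : ℂ) * (u x * conj (u x)) := by ring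
  rw [h1, Complex.mul_conj, Complex.normSq_eq_norm_sq]
  push_cast; ring

lemma inner_P_move (P : Set V → (l2 V →L[ℂ] l2 V))
    (hP : ∀ (S : Set V) (f : l2 V) (x : V), P S f x = if x ∈ S then f x else 0)
    (S : Set V) (f g : l2 V) : (inner ℂ f (P S g) : ℂ) = (inner ℂ (P S f) g : ℂ) := by
  rw [inner_tsum, inner_tsum]
  refine tsum_congr fun x => ?_
  rw [hP S g x, hP S f x]
  by_cases h : x ∈ S <;> simp [h]

lemma P_idem (P : Set V → (l2 V →L[ℂ] l2 V))
    (hP : ∀ (S : Set V) (f : l2 V) (x : V), P S f x = if x ∈ S then f x else 0)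
    (S : Set V) (f : l2 V) : P S (P S f) = P S f := by
  apply lp.ext; funext x
  rw [hP, hP]
  by_cases h : x ∈ S <;> simp [h, hP]


lemma arith_main (g c δ' K E t X F r1 r2 : ℝ) (hg : 0 < g) (hδ' : 0 < δ')
    (hK : 0 < K) (hgc : g * c < 1) (hδK : δ' < K)
    (hE : E ≤ (1 - c*g) * (K - δ'))
    (hs1 : g * r1 ≤ g * (c * t))
    (hs2 : g * r2 ≤ δ' * (1 - c*g) / (4*K) * t)
    (ht_lb : K * X ≤ t) (hX0 : 0 ≤ X) :
    3/4 * (δ' * (1 - c*g)) * F ≤ -g * (r1 + r2) + t - E * X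
      + 3/4 * (δ' * (1 - c*g)) * (F - X) := by
  have s3 : E * X ≤ (1 - c*g) * (K - δ') * X := mul_le_mul_of_nonneg_right hE hX0
  have hcoeff : 0 ≤ 1 - c*g - δ' * (1 - c*g) / (4*K) := by
    have h1 : δ' * (1 - c*g) / (4*K) ≤ (1 - c*g) / 4 := by
      rw [div_le_div_iff₀ (by positivity) (by norm_num)]
      nlinarith
    nlinarith
  have s4 : (1 - c*g - δ' * (1 - c*g) / (4*K)) * (K * X)
      ≤ (1 - c*g - δ' * (1 - c*g) / (4*K)) * t :=
    mul_le_mul_of_nonneg_left ht_lb hcoeff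
  have key : (1 - c*g - δ' * (1 - c*g) / (4*K)) * (K * X)
      = ((1 - c*g) * (K - δ') + 3/4 * (δ' * (1 - c*g))) * X := by
    field_simp; ring
  rw [key] at s4
  nlinarith

/-- The inverse of the conjugated compressed operator. -/
lemma conj_inverse
    (g : ℝ) (hg : 0 < g)
    (a : V → V → ℝ) (hsymm : ∀ x y, a x y = a y x) (hpos : ∀ x y, 0 ≤ a x y)
    (A : l2 V →L[ℂ] l2 V)
    (hA : ∀ (f : l2 V) (x : V), A f x = ∑' y : V, (a x y : ℂ) * f y)
    (w : V → ℝ)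
    (W : l2 V →L[ℂ] l2 V)
    (hW : ∀ (f : l2 V) (x : V), W f x = (w x : ℂ) * f x)
    (c : ℝ) (hc : 0 < c)
    (hform : ∀ f : l2 V,
      -c * (inner ℂ f (W f) : ℂ).re ≤ (inner ℂ f (A f) : ℂ).re ∧
      (inner ℂ f (A f) : ℂ).re ≤ c * (inner ℂ f (W f) : ℂ).re)
    (P : Set V → (l2 V →L[ℂ] l2 V))
    (hP : ∀ (S : Set V) (f : l2 V) (x : V), P S f x = if x ∈ S then f x else 0)
    (δ' : ℝ) (hδ' : 0 < δ') (K : ℝ) (hKpos : 0 < K)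
    (hgc : g * c < 1) (hδK : δ' < K)
    (ε : ℝ) (E : ℝ) (hE : E ≤ (1 - c*g) * (K - δ'))
    (κ : ℝ) (hκ : 0 ≤ κ)
    (hβ : g * c * (Real.exp κ - 1) = δ' * (1 - c*g) / (4*K))
    (θ : V → ℝ)
    (hlip : ∀ x y, a x y ≠ 0 → |θ x - θ y| ≤ κ)
    (M M' : l2 V →L[ℂ] l2 V)
    (hM : ∀ (f : l2 V) (x : V), M f x = ((Real.exp (θ x) : ℝ) : ℂ) * f x)
    (hM' : ∀ (f : l2 V) (x : V), M' f x = ((Real.exp (-θ x) : ℝ) : ℂ) * f x) :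
    ∃ S : l2 V →L[ℂ] l2 V, ‖S‖ ≤ (3/4 * (δ' * (1 - c*g)))⁻¹ ∧
      (M'.comp (S.comp M)).comp
        ((P {x | K < w x}).comp
          (((-(g:ℂ) • A + W - ((E:ℂ) + (ε:ℂ) * Complex.I) • 1).comp (P {x | K < w x})))
        + ((3/4 * (δ' * (1 - c*g)) : ℝ) : ℂ) • (1 - P {x | K < w x})) = 1 ∧
      ((P {x | K < w x}).comp
          (((-(g:ℂ) • A + W - ((E:ℂ) + (ε:ℂ) * Complex.I) • 1).comp (P {x | K < w x})))
        + ((3/4 * (δ' * (1 - c*g)) : ℝ) : ℂ) • (1 - P {x | K < w x})).comp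
        (M'.comp (S.comp M)) = 1 := by
  classical
  set 𝒱 : Set V := {x | K < w x} with h𝒱
  set χ : l2 V →L[ℂ] l2 V := P 𝒱 with hχ
  set μ : ℝ := 3/4 * (δ' * (1 - c*g)) with hμ
  have hμpos : 0 < μ := by rw [hμ]; nlinarith
  set Hz : l2 V →L[ℂ] l2 V :=
    -(g:ℂ) • A + W - ((E:ℂ) + (ε:ℂ) * Complex.I) • 1 with hHz
  set T' : l2 V →L[ℂ] l2 V := χ.comp (Hz.comp χ) + ((μ:ℝ) : ℂ) • (1 - χ) with hT'
  set Qρ : l2 V →L[ℂ] l2 V :=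
    χ.comp ((M.comp (Hz.comp M')).comp χ) + ((μ:ℝ) : ℂ) • (1 - χ) with hQρ
  have hexpκ : 0 ≤ Real.exp κ - 1 := by
    have := Real.exp_le_exp.2 hκ
    simp only [Real.exp_zero] at this
    linarith [Real.one_le_exp hκ]
  -- elementary identities
  have hMM' : ∀ (f : l2 V) (x : V), (M (M' f)) x = f x := by
    intro f x
    rw [hM, hM', ← mul_assoc, ← Complex.ofReal_mul, ← Real.exp_add]
    simp
  have hM'M : ∀ (f : l2 V) (x : V), (M' (M f)) x = f x := by
    intro f x
    rw [hM', hM, ← mul_assoc, ← Complex.ofReal_mul, ← Real.exp_add]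
    simp
  have hMM'e : ∀ f : l2 V, M (M' f) = f := fun f => lp.ext (funext (hMM' f))
  have hM'Me : ∀ f : l2 V, M' (M f) = f := fun f => lp.ext (funext (hM'M f))
  have hHzapp : ∀ f : l2 V, Hz f
      = -(g:ℂ) • (A f) + W f - ((E:ℂ) + (ε:ℂ) * Complex.I) • f := by
    intro f
    rw [hHz]
    simp only [ContinuousLinearMap.sub_apply, ContinuousLinearMap.add_apply,
      ContinuousLinearMap.smul_apply, ContinuousLinearMap.one_apply]
  -- coercivity of Qρ
  have hcoer : ∀ f : l2 V, μ * ‖f‖ ^ 2 ≤ (inner ℂ f (Qρ f) : ℂ).re := by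
    intro f
    set u : l2 V := χ f with hu
    have hu_supp : ∀ x, x ∉ 𝒱 → u x = 0 := by
      intro x hx
      rw [hu, hχ, hP]
      simp [hx]
    have hQf : Qρ f = χ (M (Hz (M' u))) + ((μ:ℝ) : ℂ) • (f - χ f) := by
      rw [hQρ]
      simp only [ContinuousLinearMap.add_apply, ContinuousLinearMap.coe_comp',
        Function.comp_apply, ContinuousLinearMap.smul_apply, ContinuousLinearMap.sub_apply,
        ContinuousLinearMap.one_apply]
      rfl
    have hinner : (inner ℂ f (Qρ f) : ℂ).re
        = (inner ℂ u (M (Hz (M' u))) : ℂ).re + μ * (‖f‖^2 - ‖u‖^2) := by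
      rw [hQf]
      rw [inner_add_right, inner_smul_right, inner_sub_right]
      rw [inner_P_move P hP 𝒱 f (M (Hz (M' u)))]
      have h1 : (inner ℂ f (χ f) : ℂ) = (inner ℂ u u : ℂ) := by
        rw [hu]
        nth_rewrite 1 [← P_idem P hP 𝒱 f]
        rw [inner_P_move P hP 𝒱 f (P 𝒱 f)]
      rw [h1]
      have h2 : (inner ℂ f f : ℂ) = ((‖f‖:ℂ))^2 := inner_self_eq_norm_sq_to_K f
      have h3 : (inner ℂ u u : ℂ) = ((‖u‖:ℂ))^2 := inner_self_eq_norm_sq_to_K u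
      rw [h2, h3, Complex.add_re]
      congr 1
      have : (((‖f‖:ℂ))^2 - ((‖u‖:ℂ))^2) = ((‖f‖^2 - ‖u‖^2 : ℝ) : ℂ) := by push_cast; ring
      rw [this, re_ofReal_mul', Complex.ofReal_re]
    -- expansion of M (Hz (M' u))
    set du : l2 V := M (A (M' u)) - A u with hdu
    have eW : M (W (M' u)) = W u := by
      apply lp.ext; funext x
      rw [hM, hW, hM']
      have : ((Real.exp (θ x) : ℝ):ℂ) * ((w x : ℂ) * (((Real.exp (-θ x) : ℝ):ℂ) * u x))
          = ((Real.exp (θ x) * Real.exp (-θ x) : ℝ):ℂ) * ((w x : ℂ) * u x) := by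
        push_cast; ring
      rw [this, ← Real.exp_add]
      simp [hW]
    have hMA : M (A (M' u)) = A u + du := by rw [hdu]; abel
    have hexp : M (Hz (M' u))
        = -(g:ℂ) • (A u + du) + W u - ((E:ℂ) + (ε:ℂ) * Complex.I) • u := by
      rw [hHzapp (M' u), map_sub, map_add, map_smul, map_smul, hMA, eW, hMM'e]
    -- real quantities
    set t : ℝ := (inner ℂ u (W u) : ℂ).re with ht
    set r1 : ℝ := (inner ℂ u (A u) : ℂ).re with hr1d
    set r2 : ℝ := (inner ℂ u du : ℂ).re with hr2d
    set X : ℝ := ‖u‖^2 with hX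
    have hips : (inner ℂ u (M (Hz (M' u))) : ℂ).re = -g * (r1 + r2) + t - E * X := by
      rw [hexp, inner_sub_right, inner_add_right, inner_smul_right, inner_smul_right,
        inner_add_right]
      rw [Complex.sub_re, Complex.add_re]
      have hng : (-(g:ℂ)) = ((-g : ℝ) : ℂ) := by push_cast; ring
      rw [hng]
      have h4 : (((-g:ℝ):ℂ) * ((inner ℂ u (A u) : ℂ) + (inner ℂ u du : ℂ))).re
          = -g * (r1 + r2) := by
        rw [re_ofReal_mul', Complex.add_re, hr1d, hr2d]
      have hz : (((E:ℂ) + (ε:ℂ) * Complex.I) * (inner ℂ u u : ℂ)).re = E * X := by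
        have h5 : (inner ℂ u u : ℂ).re = ‖u‖^2 := by
          have h := inner_self_eq_norm_sq (𝕜 := ℂ) u
          rwa [RCLike.re_to_complex] at h
        have h6 : (inner ℂ u u : ℂ).im = 0 := by
          have h := inner_self_im (𝕜 := ℂ) u
          rwa [RCLike.im_to_complex] at h
        rw [Complex.mul_re, h5, h6]
        simp [hX]
      rw [h4, hz, ht]
    -- bounds
    have hr1 : r1 ≤ c * t := (hform u).2
    have habs : |r2| ≤ (Real.exp κ - 1) * (inner ℂ (absElt u) (A (absElt u)) : ℂ).re := by
      refine key_bound A a hsymm hpos hA θ κ hκ hlip u (M' u) du ?_ ?_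
      · intro y; rw [hM']
      · intro x
        have : (du : ∀ _ : V, ℂ) x = (M (A (M' u))) x - (A u) x := by
          rw [hdu]; rw [lp.coeFn_sub]; simp
        rw [this, hM]
    have hWabs : (inner ℂ (absElt u) (W (absElt u)) : ℂ).re = t := by
      rw [re_inner_diag (absElt u) (W (absElt u)) w (fun x => hW (absElt u) x),
        ht, re_inner_diag u (W u) w (fun x => hW u x)]
      refine tsum_congr fun x => ?_
      have : ‖(absElt u) x‖ = ‖u x‖ := by
        rw [absElt_apply, Complex.norm_real, Real.norm_eq_abs, abs_norm]
      rw [this]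
    have hr2' : r2 ≤ (Real.exp κ - 1) * (c * t) := by
      have h1 : (inner ℂ (absElt u) (A (absElt u)) : ℂ).re ≤ c * t := by
        rw [← hWabs]; exact (hform (absElt u)).2
      calc r2 ≤ |r2| := le_abs_self _
        _ ≤ (Real.exp κ - 1) * (inner ℂ (absElt u) (A (absElt u)) : ℂ).re := habs
        _ ≤ (Real.exp κ - 1) * (c * t) := by
            exact mul_le_mul_of_nonneg_left h1 hexpκ
    have ht_lb : K * X ≤ t := by
      rw [ht, re_inner_diag u (W u) w (fun x => hW u x), hX, norm_sq_eq_tsum, ← tsum_mul_left]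
      refine Summable.tsum_le_tsum (fun x => ?_) ((summable_norm_sq u).mul_left _)
        (summable_diag u (W u) w (fun x => hW u x))
      by_cases hx : x ∈ 𝒱
      · have : K < w x := hx
        nlinarith [sq_nonneg ‖u x‖]
      · rw [hu_supp x hx]; simp
    have hX0 : 0 ≤ X := sq_nonneg _
    have ht0 : 0 ≤ t := le_trans (by nlinarith) ht_lb
    -- arithmetic
    rw [hinner, hips]
    have s1 : g * r1 ≤ g * (c * t) := mul_le_mul_of_nonneg_left hr1 hg.le
    have s2 : g * r2 ≤ δ' * (1 - c*g) / (4*K) * t := by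
      have h1 : g * r2 ≤ g * ((Real.exp κ - 1) * (c * t)) :=
        mul_le_mul_of_nonneg_left hr2' hg.le
      have h2 : g * ((Real.exp κ - 1) * (c * t)) = (g * c * (Real.exp κ - 1)) * t := by ring
      rw [h2, hβ] at h1
      exact h1
    rw [hμ]
    exact arith_main g c δ' K E t X (‖f‖^2) r1 r2 hg hδ' hKpos hgc hδK hE s1 s2 ht_lb hX0
  obtain ⟨S, hS1, hS2, hSnorm⟩ := coercive_inverse Qρ μ hμpos hcoer
  have hSQ : ∀ f : l2 V, S (Qρ f) = f := by
    intro f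
    have := congrArg (fun (T : l2 V →L[ℂ] l2 V) => T f) hS1
    simpa using this
  have hQS : ∀ f : l2 V, Qρ (S f) = f := by
    intro f
    have := congrArg (fun (T : l2 V →L[ℂ] l2 V) => T f) hS2
    simpa using this
  -- conjugation identity: T' f = M' (Qρ (M f))
  have e_a : ∀ h : l2 V, M' (χ (M h)) = χ h := by
    intro h
    apply lp.ext; funext x
    rw [hM', hχ, hP, hP]
    by_cases hx : x ∈ 𝒱
    · simp only [hx, if_true]
      rw [hM, ← mul_assoc, ← Complex.ofReal_mul, ← Real.exp_add]
      simp
    · simp [hx]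
  have hconj : ∀ f : l2 V, T' f = M' (Qρ (M f)) := by
    intro f
    have hQMf : Qρ (M f) = χ (M (Hz (M' (χ (M f))))) + ((μ:ℝ) : ℂ) • ((M f) - χ (M f)) := by
      rw [hQρ]
      simp only [ContinuousLinearMap.add_apply, ContinuousLinearMap.coe_comp',
        Function.comp_apply, ContinuousLinearMap.smul_apply, ContinuousLinearMap.sub_apply,
        ContinuousLinearMap.one_apply]
    rw [hQMf, map_add, map_smul, map_sub, e_a f, e_a (Hz (χ f)), hM'Me f]
    rw [hT']
    simp only [ContinuousLinearMap.add_apply, ContinuousLinearMap.coe_comp',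
      Function.comp_apply, ContinuousLinearMap.smul_apply, ContinuousLinearMap.sub_apply,
      ContinuousLinearMap.one_apply]
  refine ⟨S, hSnorm, ?_, ?_⟩
  · ext f
    simp only [ContinuousLinearMap.coe_comp', Function.comp_apply,
      ContinuousLinearMap.one_apply]
    have h1 : (χ.comp (Hz.comp χ) + ((μ:ℝ):ℂ) • (1 - χ)) f = T' f := by rw [hT']
    rw [h1, hconj f, hMM'e, hSQ, hM'Me]
  · ext f
    simp only [ContinuousLinearMap.coe_comp', Function.comp_apply,
      ContinuousLinearMap.one_apply]
    have h1 : ∀ h, (χ.comp (Hz.comp χ) + ((μ:ℝ):ℂ) • (1 - χ)) h = T' h := fun h => by rw [hT']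
    rw [h1, hconj, hMM'e, hQS, hM'Me]
end MainAux
section MainT
variable {V : Type*}

lemma inv_mu_le {x : ℝ} (hx : 0 < x) : (3/4 * x)⁻¹ ≤ 4 / x := by
  have h1 : (3/4 * x)⁻¹ = 4/3 * x⁻¹ := by
    rw [mul_inv]; norm_num
  have h2 : (0:ℝ) < x⁻¹ := inv_pos.2 hx
  rw [h1, show (4:ℝ)/x = 4 * x⁻¹ from div_eq_mul_inv 4 x]
  linarith

lemma nat_min_lip {a b D k : ℕ} (h : a ≤ b + k) : min a D ≤ min b D + k := by
  omega

lemma P_sub (P : Set V → (l2 V →L[ℂ] l2 V))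
    (hP : ∀ (S : Set V) (f : l2 V) (x : V), P S f x = if x ∈ S then f x else 0)
    {S1 S2 : Set V} (hsub : S1 ⊆ S2) (f : l2 V) : P S1 (P S2 f) = P S1 f := by
  apply lp.ext; funext x
  rw [hP, hP, hP]
  by_cases h : x ∈ S1
  · simp [h, hsub h]
  · simp [h]

end MainT

end CTaux


open CTaux

/-- Combes–Thomas bound for the compression of `H − (E + iε)` to
`ℓ²(V̄_K)`, `V̄_K = {x : w(x) > K}`. Under `gc < 1`, `W₀ < K − δ′` and
`E ≤ (1 − cg)(K − δ′)`, the compression has a bounded inverse `R̄`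
(realized as an operator on `ℓ²(V)` supported on `V̄_K` and inverting
`χ_{V̄_K}(H − E − iε)χ_{V̄_K}` on functions supported in `V̄_K`), and
`‖χ_𝒜 R̄ χ_ℬ‖ ≤ C exp(−η dist(𝒜,ℬ))` for all nonempty `𝒜, ℬ ⊆ V̄_K`, where
`C = 4/(δ′(1 − cg))` and `η = (1/s_max) log(1 + δ′(1 − cg)/(4Kcg))`. -/
theorem combes_thomas_compressed
    {V : Type*} [Countable V] [DecidableEq V]
    (G : SimpleGraph V) (hconn : G.Connected)
    (g : ℝ) (hg : 0 < g) (smax : ℕ) (hsmax : 1 ≤ smax)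
    (a : V → V → ℝ) (hsymm : ∀ x y, a x y = a y x) (hpos : ∀ x y, 0 ≤ a x y)
    (hrange : ∀ x y, smax < G.dist x y → a x y = 0)
    (A : l2 V →L[ℂ] l2 V)
    (hA : ∀ (f : l2 V) (x : V), A f x = ∑' y : V, (a x y : ℂ) * f y)
    (w : V → ℝ) (hwbd : BddAbove (Set.range w))
    (W₀ : ℝ) (hW₀ : IsGLB (Set.range w) W₀) (hW₀pos : 0 < W₀)
    (W : l2 V →L[ℂ] l2 V)
    (hW : ∀ (f : l2 V) (x : V), W f x = (w x : ℂ) * f x)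
    (c : ℝ) (hc : 0 < c)
    (hform : ∀ f : l2 V,
      -c * (inner ℂ f (W f) : ℂ).re ≤ (inner ℂ f (A f) : ℂ).re ∧
      (inner ℂ f (A f) : ℂ).re ≤ c * (inner ℂ f (W f) : ℂ).re)
    (P : Set V → (l2 V →L[ℂ] l2 V))
    (hP : ∀ (S : Set V) (f : l2 V) (x : V), P S f x = if x ∈ S then f x else 0)
    (δ' : ℝ) (hδ' : 0 < δ') (K : ℝ) (hKpos : 0 < K)
    (hgc : g * c < 1) (hW₀K : W₀ < K - δ')
    (ε : ℝ) (E : ℝ) (hE : E ≤ (1 - c*g) * (K - δ')) :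
    ∃ R : l2 V →L[ℂ] l2 V,
      (∀ f : l2 V, R f = P {x | K < w x} (R (P {x | K < w x} f))) ∧
      (∀ f : l2 V, P {x | K < w x} f = f →
        P {x | K < w x} ((-(g:ℂ) • A + W - ((E:ℂ) + (ε:ℂ) * Complex.I) • 1) (R f)) = f ∧
        R (P {x | K < w x} ((-(g:ℂ) • A + W - ((E:ℂ) + (ε:ℂ) * Complex.I) • 1) f)) = f) ∧
      ∀ 𝒜 ℬ : Set V, 𝒜 ⊆ {x | K < w x} → ℬ ⊆ {x | K < w x} →
        𝒜.Nonempty → ℬ.Nonempty →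
        ‖P 𝒜 * R * P ℬ‖ ≤ (4 / (δ' * (1 - c*g))) *
          Real.exp (-((1/(smax:ℝ)) * Real.log (1 + δ' * (1 - c*g)/(4*K*c*g))) *
            (setGraphDist G 𝒜 ℬ : ℝ)) := by
  classical
  have hδK : δ' < K := by
    have h := hW₀pos
    linarith [hW₀K]
  have hcg1 : 0 < 1 - c * g := by linarith [hgc, mul_comm g c]
  have hcg1' : c * g < 1 := by linarith [hcg1]
  set η : ℝ := (1/(smax:ℝ)) * Real.log (1 + δ' * (1 - c*g)/(4*K*c*g)) with hηdef
  have hsm : (0:ℝ) < (smax:ℝ) := by exact_mod_cast Nat.pos_of_ne_zero (by omega)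
  have hargpos : (0:ℝ) < 1 + δ' * (1 - c*g)/(4*K*c*g) := by positivity
  have harg1 : (1:ℝ) ≤ 1 + δ' * (1 - c*g)/(4*K*c*g) := by
    have : 0 ≤ δ' * (1 - c*g)/(4*K*c*g) := by positivity
    linarith
  have hηpos : 0 ≤ η := by
    rw [hηdef]
    exact mul_nonneg (by positivity) (Real.log_nonneg harg1)
  set κ : ℝ := η * smax with hκdef
  have hκ : 0 ≤ κ := mul_nonneg hηpos hsm.le
  have hexpκ : Real.exp κ = 1 + δ' * (1 - c*g)/(4*K*c*g) := by
    have h1 : κ = Real.log (1 + δ' * (1 - c*g)/(4*K*c*g)) := by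
      rw [hκdef, hηdef]
      field_simp
    rw [h1, Real.exp_log hargpos]
  have hβ : g * c * (Real.exp κ - 1) = δ' * (1 - c*g) / (4*K) := by
    rw [hexpκ]
    field_simp
    ring
  -- the identity-weight inverse
  set M₀ : l2 V →L[ℂ] l2 V :=
    mulOp (fun _ => Real.exp 0) 1 zero_le_one (fun x => by simp) with hM₀
  obtain ⟨S₀, hS₀n, hL₀, hR₀⟩ :=
    conj_inverse g hg a hsymm hpos A hA w W hW c hc hform P hP δ' hδ' K hKpos
      hgc hδK ε E hE κ hκ hβ (fun _ => 0)
      (fun x y _ => by simpa using hκ) M₀ M₀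
      (fun f x => rfl) (fun f x => by rw [hM₀, mulOp_apply]; norm_num)
  set μ : ℝ := 3/4 * (δ' * (1 - c*g)) with hμ
  have hμpos : 0 < μ := by rw [hμ]; positivity
  set 𝒱 : Set V := {x | K < w x} with h𝒱
  set Hz : l2 V →L[ℂ] l2 V :=
    -(g:ℂ) • A + W - ((E:ℂ) + (ε:ℂ) * Complex.I) • 1 with hHz
  set T' : l2 V →L[ℂ] l2 V :=
    (P 𝒱).comp (Hz.comp (P 𝒱)) + ((μ:ℝ) : ℂ) • (1 - P 𝒱) with hT'
  set Inv : l2 V →L[ℂ] l2 V := M₀.comp (S₀.comp M₀) with hInv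
  have hITop : Inv.comp T' = 1 := hL₀
  have hTIop : T'.comp Inv = 1 := hR₀
  have hIT : ∀ f : l2 V, Inv (T' f) = f := by
    intro f
    have := congrArg (fun (B : l2 V →L[ℂ] l2 V) => B f) hITop
    simpa using this
  have hTI : ∀ f : l2 V, T' (Inv f) = f := by
    intro f
    have := congrArg (fun (B : l2 V →L[ℂ] l2 V) => B f) hTIop
    simpa using this
  have hPP : ∀ f : l2 V, P 𝒱 (P 𝒱 f) = P 𝒱 f := P_idem P hP 𝒱
  have hT'app : ∀ f : l2 V,
      T' f = P 𝒱 (Hz (P 𝒱 f)) + ((μ:ℝ) : ℂ) • (f - P 𝒱 f) := by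
    intro f
    rw [hT']
    simp only [ContinuousLinearMap.add_apply, ContinuousLinearMap.coe_comp',
      Function.comp_apply, ContinuousLinearMap.smul_apply, ContinuousLinearMap.sub_apply,
      ContinuousLinearMap.one_apply]
  have hcommT : ∀ f : l2 V, P 𝒱 (T' f) = T' (P 𝒱 f) := by
    intro f
    rw [hT'app f, hT'app (P 𝒱 f), map_add, map_smul, map_sub, hPP, hPP]
  have hcommI : ∀ f : l2 V, P 𝒱 (Inv f) = Inv (P 𝒱 f) := by
    intro f
    symm
    conv_lhs => rw [← hTI f]
    rw [hcommT (Inv f), hIT]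
  refine ⟨(P 𝒱).comp Inv, ?_, ?_, ?_⟩
  · intro f
    simp only [ContinuousLinearMap.coe_comp', Function.comp_apply]
    rw [← hcommI f, hPP (Inv f), hPP (Inv f)]
  · intro f hf
    have hRf : P 𝒱 (Inv f) = Inv f := by
      rw [hcommI f, hf]
    constructor
    · simp only [ContinuousLinearMap.coe_comp', Function.comp_apply]
      rw [hRf]
      have h1 : T' (Inv f) = P 𝒱 (Hz (P 𝒱 (Inv f))) + ((μ:ℝ) : ℂ) • (Inv f - P 𝒱 (Inv f)) :=
        hT'app (Inv f)
      rw [hRf] at h1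
      simp only [sub_self, smul_zero, add_zero] at h1
      rw [← h1, hTI f]
    · simp only [ContinuousLinearMap.coe_comp', Function.comp_apply]
      have h1 : P 𝒱 (Hz f) = T' f := by
        rw [hT'app f, hf]
        simp
      rw [h1, hIT f]
      exact hf
  · intro 𝒜 ℬ h𝒜 hℬ h𝒜ne hℬne
    set D : ℕ := setGraphDist G 𝒜 ℬ with hD
    set dB : V → ℕ := distToSet G ℬ with hdB
    set ρ : V → ℝ := fun x => η * ((min (dB x) D : ℕ) : ℝ) with hρ
    have hρ0 : ∀ x, 0 ≤ ρ x := fun x => mul_nonneg hηpos (by positivity)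
    have hρbd : ∀ x, ρ x ≤ η * D := by
      intro x
      rw [hρ]
      refine mul_le_mul_of_nonneg_left ?_ hηpos
      exact_mod_cast Nat.cast_le.2 (min_le_right _ _)
    have hlipρ : ∀ x y, a x y ≠ 0 → |ρ x - ρ y| ≤ κ := by
      intro x y ha
      have hdist : G.dist x y ≤ smax := by
        by_contra h
        push_neg at h
        exact ha (hrange x y h)
      have n1 : dB x ≤ G.dist x y + dB y := by
        rw [hdB]
        have := distToSet_lipschitz G hconn hℬne x y
        omega
      have n2 : dB y ≤ G.dist x y + dB x := by
        rw [hdB]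
        have := distToSet_lipschitz G hconn hℬne y x
        rw [SimpleGraph.dist_comm] at this
        omega
      have m1 : min (dB x) D ≤ min (dB y) D + G.dist x y := nat_min_lip (by omega)
      have m2 : min (dB y) D ≤ min (dB x) D + G.dist x y := nat_min_lip (by omega)
      have hm : |((min (dB x) D : ℕ) : ℝ) - ((min (dB y) D : ℕ) : ℝ)| ≤ (G.dist x y : ℝ) := by
        rw [abs_sub_le_iff]
        constructor
        · have h := (Nat.cast_le (α := ℝ)).2 m1; push_cast; push_cast at h; linarith
        · have h := (Nat.cast_le (α := ℝ)).2 m2; push_cast; push_cast at h; linarith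
      have : |ρ x - ρ y| = η * |((min (dB x) D : ℕ) : ℝ) - ((min (dB y) D : ℕ) : ℝ)| := by
        rw [hρ]
        rw [← mul_sub, abs_mul, abs_of_nonneg hηpos]
      rw [this, hκdef]
      refine mul_le_mul_of_nonneg_left (hm.trans ?_) hηpos
      exact_mod_cast hdist
    set M : l2 V →L[ℂ] l2 V :=
      mulOp (fun x => Real.exp (ρ x)) (Real.exp (η * D)) (Real.exp_pos _).le
        (fun x => by
          rw [abs_of_pos (Real.exp_pos _)]
          exact Real.exp_le_exp.2 (hρbd x)) with hM
    set M' : l2 V →L[ℂ] l2 V :=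
      mulOp (fun x => Real.exp (-ρ x)) 1 zero_le_one
        (fun x => by
          rw [abs_of_pos (Real.exp_pos _)]
          have : -ρ x ≤ 0 := neg_nonpos.2 (hρ0 x)
          calc Real.exp (-ρ x) ≤ Real.exp 0 := Real.exp_le_exp.2 this
            _ = 1 := Real.exp_zero) with hM'
    obtain ⟨S, hSn, hLop, hRop⟩ :=
      conj_inverse g hg a hsymm hpos A hA w W hW c hc hform P hP δ' hδ' K hKpos
        hgc hδK ε E hE κ hκ hβ ρ hlipρ M M'
        (fun f x => rfl) (fun f x => rfl)
    set Invρ : l2 V →L[ℂ] l2 V := M'.comp (S.comp M) with hInvρ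
    have huniq : Inv = Invρ := by
      have h1 : Inv * T' = 1 := hITop
      have h2 : T' * Invρ = 1 := hRop
      exact left_inv_eq_right_inv h1 h2
    -- factorization
    set L : l2 V →L[ℂ] l2 V := (P 𝒜).comp M' with hLdef
    set Rt : l2 V →L[ℂ] l2 V := M.comp (P ℬ) with hRtdef
    have hfact : P 𝒜 * (P 𝒱).comp Inv * P ℬ = L.comp (S.comp Rt) := by
      ext f
      have h1 : (P 𝒜 * (P 𝒱).comp Inv * P ℬ) f = P 𝒜 (P 𝒱 (Inv (P ℬ f))) := rfl
      have h2 : (L.comp (S.comp Rt)) f = P 𝒜 (M' (S (M (P ℬ f)))) := rfl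
      rw [h1, h2, huniq]
      have h3 : Invρ (P ℬ f) = M' (S (M (P ℬ f))) := rfl
      rw [h3, P_sub P hP h𝒜]
    have hLn : ‖L‖ ≤ Real.exp (-(η * D)) := by
      refine ContinuousLinearMap.opNorm_le_bound _ (Real.exp_pos _).le fun f => ?_
      refine norm_le_of_pointwise _ f _ (Real.exp_pos _).le fun x => ?_
      have h1 : (L f) x = if x ∈ 𝒜 then ((Real.exp (-ρ x) : ℝ) : ℂ) * f x else 0 := by
        rw [hLdef]
        have : (L f) x = (P 𝒜 (M' f)) x := rfl
        rw [this, hP]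
        by_cases hx : x ∈ 𝒜 <;> simp [hx, hM', mulOp_apply]
      rw [h1]
      by_cases hx : x ∈ 𝒜
      · simp only [hx, if_true]
        rw [norm_mul, Complex.norm_real, Real.norm_eq_abs, abs_of_pos (Real.exp_pos _)]
        have hDle : D ≤ dB x := setGraphDist_le_distToSet G hℬne hx
        have hρx : ρ x = η * D := by
          have hrfl : ρ x = η * ((min (dB x) D : ℕ) : ℝ) := rfl
          rw [hrfl, min_eq_right hDle]
        rw [hρx]
      · simp only [hx, if_false]
        simp only [norm_zero]
        positivity
    have hRtn : ‖Rt‖ ≤ 1 := by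
      refine ContinuousLinearMap.opNorm_le_bound _ zero_le_one fun f => ?_
      refine norm_le_of_pointwise _ f _ zero_le_one fun x => ?_
      have h1 : (Rt f) x = ((Real.exp (ρ x) : ℝ) : ℂ) * (if x ∈ ℬ then f x else 0) := by
        rw [hRtdef]
        have : (Rt f) x = (M (P ℬ f)) x := rfl
        rw [this, hM, mulOp_apply, hP]
      rw [h1]
      by_cases hx : x ∈ ℬ
      · simp only [hx, if_true]
        rw [norm_mul, Complex.norm_real, Real.norm_eq_abs, abs_of_pos (Real.exp_pos _)]
        have hρx : ρ x = 0 := by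
          have hrfl : ρ x = η * ((min (distToSet G ℬ x) D : ℕ) : ℝ) := rfl
          rw [hrfl, distToSet_zero G hx]
          simp
        rw [hρx]
        simp
      · simp only [hx, if_false, mul_zero, norm_zero]
        positivity
    -- final bound
    have hchain : ‖P 𝒜 * (P 𝒱).comp Inv * P ℬ‖ ≤ Real.exp (-(η * D)) * ((μ:ℝ)⁻¹ * 1) := by
      rw [hfact]
      calc ‖L.comp (S.comp Rt)‖ ≤ ‖L‖ * ‖S.comp Rt‖ := ContinuousLinearMap.opNorm_comp_le _ _
        _ ≤ ‖L‖ * (‖S‖ * ‖Rt‖) := by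
            refine mul_le_mul_of_nonneg_left (ContinuousLinearMap.opNorm_comp_le _ _)
              (norm_nonneg _)
        _ ≤ Real.exp (-(η * D)) * ((μ:ℝ)⁻¹ * 1) := by
            refine mul_le_mul hLn ?_ (by positivity) (Real.exp_pos _).le
            refine mul_le_mul hSn hRtn (norm_nonneg _) ?_
            rw [hμ] at hμpos ⊢
            positivity
    refine hchain.trans ?_
    have hexp_eq : -((1/(smax:ℝ)) * Real.log (1 + δ' * (1 - c*g)/(4*K*c*g)))
        * ((setGraphDist G 𝒜 ℬ : ℕ) : ℝ) = -(η * D) := by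
      rw [hηdef, hD]
      ring
    rw [hexp_eq]
    have hμinv : (μ:ℝ)⁻¹ ≤ 4 / (δ' * (1 - c*g)) := by
      rw [hμ]
      exact inv_mu_le (by positivity)
    have hexppos : 0 < Real.exp (-(η * D)) := Real.exp_pos _
    calc Real.exp (-(η * D)) * ((μ:ℝ)⁻¹ * 1)
        = (μ:ℝ)⁻¹ * Real.exp (-(η * D)) := by ring
      _ ≤ (4 / (δ' * (1 - c*g))) * Real.exp (-(η * D)) :=
          mul_le_mul_of_nonneg_right hμinv hexppos.le
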